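/- Let (M,J,g) be a compact Hermitian manifold of complex dimension n that is geometrically Bott-Chern formal (the wedge product of any two Bott-Chern harmonic forms is Bott-Chern harmonic). Then every holomorphic p-form on M is d-closed, for all 0 ≤ p ≤ n. -/

import Mathlib

/-!
We model the bigraded algebra of forms on the compact Hermitian n-manifold abstractly:
`Ω` is the algebra of complex forms (multiplication = wedge), `A p q` the submodule of
(p,q)-forms, `del`/`delbar` the Dolbeault operators, `hstar` the ℂ-antilinear Hodge
star and `conj` conjugation, with their standard properties, the Leibniz rules, the
orthogonality of Bott-Chern harmonic forms and im(∂∂̄) coming from the Bott-Chern Hodge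
decomposition (`horth`), and the pointwise-positivity fact that for a nonzero (p,0)-form
x, x ∧ x̄ ≠ 0 (`hpos`). A holomorphic p-form α (∂̄α = 0) is d-closed iff ∂α = 0.
-/

/-- Bott-Chern harmonicity: ∂x = 0, ∂̄x = 0 and ∂∂̄*x = 0. -/
def IsBCHarmonic {Ω : Type*} [Ring Ω] [Algebra ℂ Ω]
    (del delbar : Ω →ₗ[ℂ] Ω) (hstar : Ω → Ω) (x : Ω) : Prop :=
  del x = 0 ∧ delbar x = 0 ∧ del (delbar (hstar x)) = 0

/-!
If α is holomorphic, β = ∂α is Bott-Chern harmonic, and so is its conjugate β̄: both are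
closed, and the third condition holds for bidegree reasons. By formality β ∧ β̄ is
Bott-Chern harmonic, while the Leibniz rules give β ∧ β̄ = ±∂∂̄(α ∧ ᾱ). Harmonic forms are
orthogonal to im ∂∂̄, so β ∧ β̄ = 0, which by positivity forces β = 0.
-/

section

variable {Ω : Type*} [Ring Ω] [Algebra ℂ Ω] {A : ℕ → ℕ → Submodule ℂ Ω}
  {del delbar : Ω →ₗ[ℂ] Ω} {hstar conj : Ω → Ω} {n : ℕ}

/-- `conj` need not be additive; it fixes `0` because `0` lies in a vanishing bidegree. -/
theorem map_zero_of_swap_bidegree (hconj_mem : ∀ p q, ∀ x ∈ A p q, conj x ∈ A q p)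
    (hdeg_q : ∀ p q, n < q → ∀ x ∈ A p q, x = 0) : conj 0 = 0 :=
  hdeg_q 0 (n + 1) n.lt_succ_self _ (hconj_mem _ _ _ (A (n + 1) 0).zero_mem)

theorem isBCHarmonic_of_mem_bidegree_p_zero
    (hdelbar_mem : ∀ p q, ∀ x ∈ A p q, delbar x ∈ A p (q + 1))
    (hstar_mem : ∀ p q, ∀ x ∈ A p q, hstar x ∈ A (n - p) (n - q))
    (hdeg_q : ∀ p q, n < q → ∀ x ∈ A p q, x = 0)
    {p : ℕ} {x : Ω} (hx : x ∈ A p 0) (hdel : del x = 0) (hdelbar : delbar x = 0) :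
    IsBCHarmonic del delbar hstar x := by
  refine ⟨hdel, hdelbar, ?_⟩
  have h : delbar (hstar x) = 0 :=
    hdeg_q _ (n - 0 + 1) (by omega) _ (hdelbar_mem _ _ _ (hstar_mem _ _ _ hx))
  rw [h, map_zero]

theorem isBCHarmonic_of_mem_bidegree_zero_q
    (hdel_mem : ∀ p q, ∀ x ∈ A p q, del x ∈ A (p + 1) q)
    (hdelbar_mem : ∀ p q, ∀ x ∈ A p q, delbar x ∈ A p (q + 1))
    (hstar_mem : ∀ p q, ∀ x ∈ A p q, hstar x ∈ A (n - p) (n - q))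
    (hdeg_p : ∀ p q, n < p → ∀ x ∈ A p q, x = 0)
    {q : ℕ} {x : Ω} (hx : x ∈ A 0 q) (hdel : del x = 0) (hdelbar : delbar x = 0) :
    IsBCHarmonic del delbar hstar x :=
  ⟨hdel, hdelbar, hdeg_p (n - 0 + 1) _ (by omega) _
    (hdel_mem _ _ _ (hdelbar_mem _ _ _ (hstar_mem _ _ _ hx)))⟩

theorem del_mul_conj_del_eq_del_delbar
    (hconj_del : ∀ x : Ω, conj (del x) = delbar (conj x))
    (hleib_del : ∀ p q, ∀ x ∈ A p q, ∀ y : Ω,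
      del (x * y) = del x * y + ((-1 : ℂ) ^ (p + q)) • (x * del y))
    (hleib_delbar : ∀ p q, ∀ x ∈ A p q, ∀ y : Ω,
      delbar (x * y) = delbar x * y + ((-1 : ℂ) ^ (p + q)) • (x * delbar y))
    {p : ℕ} {α : Ω} (hα : α ∈ A p 0) (hdelbar : delbar α = 0)
    (hclosed : del (conj (del α)) = 0) :
    del α * conj (del α) = del (delbar (((-1 : ℂ) ^ p) • (α * conj α))) := by
  have hdelbar_mul : delbar (α * conj α) = ((-1 : ℂ) ^ p) • (α * conj (del α)) := by
    rw [hleib_delbar p 0 α hα, hdelbar, zero_mul, zero_add, hconj_del, add_zero]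
  have hdel_mul : del (α * conj (del α)) = del α * conj (del α) := by
    rw [hleib_del p 0 α hα, hclosed, mul_zero, smul_zero, add_zero]
  rw [map_smul, map_smul, hdelbar_mul, map_smul, hdel_mul, smul_smul, ← pow_add,
    ← two_mul, pow_mul, neg_one_sq, one_pow, one_smul]

end

theorem stmt_9_general (n : ℕ) {Ω : Type*} [Ring Ω] [Algebra ℂ Ω]
    (A : ℕ → ℕ → Submodule ℂ Ω)
    (del delbar : Ω →ₗ[ℂ] Ω) (hstar conj : Ω → Ω)
    (hdel_mem : ∀ p q, ∀ x ∈ A p q, del x ∈ A (p + 1) q)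
    (hdelbar_mem : ∀ p q, ∀ x ∈ A p q, delbar x ∈ A p (q + 1))
    (hstar_mem : ∀ p q, ∀ x ∈ A p q, hstar x ∈ A (n - p) (n - q))
    (hconj_mem : ∀ p q, ∀ x ∈ A p q, conj x ∈ A q p)
    (hmul_mem : ∀ p q r s, ∀ x ∈ A p q, ∀ y ∈ A r s, x * y ∈ A (p + r) (q + s))
    (hdel2 : ∀ x : Ω, del (del x) = 0)
    (hanticomm : ∀ x : Ω, del (delbar x) = - delbar (del x))
    (hconj_del : ∀ x : Ω, conj (del x) = delbar (conj x))
    (hconj_delbar : ∀ x : Ω, conj (delbar x) = del (conj x))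
    (hdeg_p : ∀ p q, n < p → ∀ x ∈ A p q, x = 0)
    (hdeg_q : ∀ p q, n < q → ∀ x ∈ A p q, x = 0)
    (hleib_del : ∀ p q, ∀ x ∈ A p q, ∀ y : Ω,
      del (x * y) = del x * y + ((-1 : ℂ) ^ (p + q)) • (x * del y))
    (hleib_delbar : ∀ p q, ∀ x ∈ A p q, ∀ y : Ω,
      delbar (x * y) = delbar x * y + ((-1 : ℂ) ^ (p + q)) • (x * delbar y))
    -- orthogonality of Bott-Chern harmonic forms and im(∂∂̄) (Hodge decomposition):
    (horth : ∀ p q, ∀ x ∈ A (p + 1) (q + 1), IsBCHarmonic del delbar hstar x →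
      (∃ y ∈ A p q, x = del (delbar y)) → x = 0)
    -- a nonzero (p,0)-form wedged with its conjugate is nonzero (pointwise fact):
    (hpos : ∀ p, ∀ x ∈ A p 0, x ≠ 0 → x * conj x ≠ 0)
    -- geometric Bott-Chern formality:
    (hformal : ∀ x y : Ω, (∃ p q, x ∈ A p q) → (∃ r s, y ∈ A r s) →
      IsBCHarmonic del delbar hstar x → IsBCHarmonic del delbar hstar y →
      IsBCHarmonic del delbar hstar (x * y)) :
    ∀ p, p ≤ n → ∀ α ∈ A p 0, delbar α = 0 → del α = 0 := by
  intro p hpn α hα hdelbar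
  have hconj_zero : conj 0 = 0 := map_zero_of_swap_bidegree hconj_mem hdeg_q
  have hβ : del α ∈ A (p + 1) 0 := hdel_mem p 0 α hα
  have hβ_conj : conj (del α) ∈ A 0 (p + 1) := hconj_mem _ _ _ hβ
  have hdelbar_β : delbar (del α) = 0 := by
    simpa [hdelbar] using (hanticomm α).symm
  have hdel_β_conj : del (conj (del α)) = 0 := by
    rw [← hconj_delbar, hdelbar_β, hconj_zero]
  have hdelbar_β_conj : delbar (conj (del α)) = 0 := by
    rw [← hconj_del, hdel2, hconj_zero]
  have hharm : IsBCHarmonic del delbar hstar (del α * conj (del α)) :=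
    hformal _ _ ⟨_, _, hβ⟩ ⟨_, _, hβ_conj⟩
      (isBCHarmonic_of_mem_bidegree_p_zero hdelbar_mem hstar_mem hdeg_q hβ (hdel2 α) hdelbar_β)
      (isBCHarmonic_of_mem_bidegree_zero_q hdel_mem hdelbar_mem hstar_mem hdeg_p hβ_conj
        hdel_β_conj hdelbar_β_conj)
  have hmem : del α * conj (del α) ∈ A (p + 1) (p + 1) := by
    simpa using hmul_mem _ _ _ _ _ hβ _ hβ_conj
  have hpotential : ((-1 : ℂ) ^ p) • (α * conj α) ∈ A p p :=
    (A p p).smul_mem _ (by simpa using hmul_mem _ _ _ _ _ hα _ (hconj_mem _ _ _ hα))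
  by_contra hne
  exact hpos (p + 1) _ hβ hne <| horth p p _ hmem hharm ⟨_, hpotential,
    del_mul_conj_del_eq_del_delbar hconj_del hleib_del hleib_delbar hα hdelbar hdel_β_conj⟩

theorem stmt_9 (n : ℕ) {Ω : Type*} [Ring Ω] [Algebra ℂ Ω]
    (A : ℕ → ℕ → Submodule ℂ Ω)
    (del delbar : Ω →ₗ[ℂ] Ω) (hstar conj : Ω → Ω)
    (hdel_mem : ∀ p q, ∀ x ∈ A p q, del x ∈ A (p + 1) q)
    (hdelbar_mem : ∀ p q, ∀ x ∈ A p q, delbar x ∈ A p (q + 1))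
    (hstar_mem : ∀ p q, ∀ x ∈ A p q, hstar x ∈ A (n - p) (n - q))
    (hconj_mem : ∀ p q, ∀ x ∈ A p q, conj x ∈ A q p)
    (hmul_mem : ∀ p q r s, ∀ x ∈ A p q, ∀ y ∈ A r s, x * y ∈ A (p + r) (q + s))
    (hdel2 : ∀ x : Ω, del (del x) = 0)
    (hdelbar2 : ∀ x : Ω, delbar (delbar x) = 0)
    (hanticomm : ∀ x : Ω, del (delbar x) = - delbar (del x))
    (hconj_del : ∀ x : Ω, conj (del x) = delbar (conj x))
    (hconj_delbar : ∀ x : Ω, conj (delbar x) = del (conj x))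
    (hdeg_p : ∀ p q, n < p → ∀ x ∈ A p q, x = 0)
    (hdeg_q : ∀ p q, n < q → ∀ x ∈ A p q, x = 0)
    (hleib_del : ∀ p q, ∀ x ∈ A p q, ∀ y : Ω,
      del (x * y) = del x * y + ((-1 : ℂ) ^ (p + q)) • (x * del y))
    (hleib_delbar : ∀ p q, ∀ x ∈ A p q, ∀ y : Ω,
      delbar (x * y) = delbar x * y + ((-1 : ℂ) ^ (p + q)) • (x * delbar y))
    -- orthogonality of Bott-Chern harmonic forms and im(∂∂̄) (Hodge decomposition):
    (horth : ∀ p q, ∀ x ∈ A (p + 1) (q + 1), IsBCHarmonic del delbar hstar x →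
      (∃ y ∈ A p q, x = del (delbar y)) → x = 0)
    -- a nonzero (p,0)-form wedged with its conjugate is nonzero (pointwise fact):
    (hpos : ∀ p, ∀ x ∈ A p 0, x ≠ 0 → x * conj x ≠ 0)
    -- geometric Bott-Chern formality:
    (hformal : ∀ x y : Ω, (∃ p q, x ∈ A p q) → (∃ r s, y ∈ A r s) →
      IsBCHarmonic del delbar hstar x → IsBCHarmonic del delbar hstar y →
      IsBCHarmonic del delbar hstar (x * y)) :
    ∀ p, p ≤ n → ∀ α ∈ A p 0, delbar α = 0 → del α = 0 :=
  stmt_9_general n A del delbar hstar conj hdel_mem hdelbar_mem hstar_mem hconj_mem hmul_mem hdel2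
    hanticomm hconj_del hconj_delbar hdeg_p hdeg_q hleib_del hleib_delbar horth hpos hformal
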